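/- With the decomposition |h^H f|² = Z_Σ + Z₀, where Z_Σ has CDF asymptotic to (2^M/π^{M/2})(1+d^α)^{M/2} z^{M/2}/M! and Z₀ has CDF asymptotic to 2(1+d^α)^{1/2} z^{1/2}/(M^{1/2}√π) as z → 0⁺, and Z_Σ, Z₀ independent, the CDF of |h^H f|² satisfies F(y) = [2^M (1+d^α)^{(M+1)/2} Beta(3/2, M/2) / (π^{M/2} (M−1)! M^{1/2} Γ(1/2))] · y^{(M+1)/2} · (1+o(1)) as y → 0⁺. -/

import Mathlib

/-!
Write `F_Σ(z) ≈ a z^p`, `F₀(z) ≈ b z^q` with `p = M/2`, `q = 1/2`; letting `z → 0⁺` forces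
`F_Σ(0) = F₀(0) = 0`. By independence `P(Z_Σ + Z₀ ≤ y) = ∫ F₀(y - x) dF_Σ(x)`, where only
`x ∈ (0, y]` matters. For small `y` both CDFs lie within factors `1 ± ε` of their power laws on
`[0, y]`, so this integral lies within `(1 ± ε)²` of
`b ∫ (y - x)^q dF_Σ(x) = b q ∫₀^y F_Σ(y - t) t^(q-1) dt ≈ a b q ∫₀^y (y - t)^p t^(q-1) dt`
(layer cake), and the last integral is the Beta integral `B(q, p+1) y^(p+q)`. Hence
`F(y) ~ a b Γ(p+1) Γ(q+1) / Γ(p+q+1) · y^(p+q)`, which for these `a, b, p, q` is the stated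
constant.
-/

open MeasureTheory ProbabilityTheory Real Filter Topology

/-- The Beta function `B(p, q) = Γ(p)Γ(q)/Γ(p+q)`. -/
noncomputable def betaFn (p q : ℝ) : ℝ := Real.Gamma p * Real.Gamma q / Real.Gamma (p + q)

open Set

theorem intervalIntegral_rpow_mul_sub_rpow {u v y : ℝ} (hu : 0 < u) (hv : 0 < v) (hy : 0 < y) :
    ∫ t in (0 : ℝ)..y, t ^ (u - 1) * (y - t) ^ (v - 1) = y ^ (u + v - 1) * betaFn u v := by
  have hbeta : Complex.betaIntegral u v = (betaFn u v : ℂ) := by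
    rw [Complex.betaIntegral_eq_Gamma_mul_div _ _ (by simpa) (by simpa), betaFn,
      ← Complex.ofReal_add, Complex.Gamma_ofReal, Complex.Gamma_ofReal, Complex.Gamma_ofReal]
    push_cast; rfl
  have hcast : ∫ t in (0 : ℝ)..y, (t : ℂ) ^ ((u : ℂ) - 1) * ((y : ℂ) - t) ^ ((v : ℂ) - 1) =
      ((∫ t in (0 : ℝ)..y, t ^ (u - 1) * (y - t) ^ (v - 1) : ℝ) : ℂ) := by
    rw [← intervalIntegral.integral_ofReal]
    refine intervalIntegral.integral_congr fun t ht => ?_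
    rw [uIcc_of_le hy.le] at ht
    push_cast [Complex.ofReal_cpow ht.1, Complex.ofReal_cpow (sub_nonneg.2 ht.2)]
    rfl
  have h := Complex.betaIntegral_scaled u v hy
  rw [hcast, hbeta, ← Complex.ofReal_one, ← Complex.ofReal_add, ← Complex.ofReal_sub,
    ← Complex.ofReal_cpow hy.le, ← Complex.ofReal_mul] at h
  exact_mod_cast h

theorem lintegral_Ioi_max_sub_rpow_mul_rpow {p q y : ℝ} (hp : 0 < p) (hq : 0 < q) (hy : 0 < y) :
    ENNReal.ofReal q *
        ∫⁻ t in Ioi 0, ENNReal.ofReal (max (y - t) 0 ^ p) * ENNReal.ofReal (t ^ (q - 1)) =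
      ENNReal.ofReal (Gamma (p + 1) * Gamma (q + 1) / Gamma (p + q + 1) * y ^ (p + q)) := by
  set f : ℝ → ℝ := fun t => t ^ (q - 1) * (y - t) ^ (p + 1 - 1)
  have hf : ∫ t in (0 : ℝ)..y, f t = y ^ (q + (p + 1) - 1) * betaFn q (p + 1) :=
    intervalIntegral_rpow_mul_sub_rpow hq (by linarith) hy
  have hf_int : IntegrableOn f (Ioc 0 y) :=
    (intervalIntegral.intervalIntegrable_of_integral_ne_zero (by
      rw [hf]; unfold betaFn; positivity)).1
  have htail :
      ∫⁻ t in Ioi y, ENNReal.ofReal (max (y - t) 0 ^ p) * ENNReal.ofReal (t ^ (q - 1)) = 0 := by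
    refine (setLIntegral_congr_fun measurableSet_Ioi fun t (ht : y < t) => ?_).trans lintegral_zero
    simp [max_eq_right (by linarith : y - t ≤ 0), zero_rpow hp.ne']
  have hbody : ∫⁻ t in Ioc 0 y, ENNReal.ofReal (max (y - t) 0 ^ p) * ENNReal.ofReal (t ^ (q - 1)) =
      ∫⁻ t in Ioc 0 y, ENNReal.ofReal (f t) := by
    refine setLIntegral_congr_fun measurableSet_Ioc fun t ht => ?_
    rw [← ENNReal.ofReal_mul (by positivity), max_eq_left (by linarith [ht.2]), mul_comm]
    simp [f]
  rw [← Ioc_union_Ioi_eq_Ioi hy.le, lintegral_union measurableSet_Ioi Ioc_disjoint_Ioi_same, htail,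
    add_zero, hbody, ← ofReal_integral_eq_lintegral_ofReal hf_int
      ((ae_restrict_iff' measurableSet_Ioc).2 (ae_of_all _ fun t ht =>
        mul_nonneg (rpow_nonneg ht.1.le _) (rpow_nonneg (sub_nonneg.2 ht.2) _))),
    ← intervalIntegral.integral_of_le hy.le, hf, ← ENNReal.ofReal_mul hq.le]
  congr 1
  rw [betaFn, Gamma_add_one hq.ne']
  ring_nf

theorem lintegral_max_sub_rpow_eq (μ : Measure ℝ) {q : ℝ} (hq : 0 < q) (y : ℝ) :
    ∫⁻ x, ENNReal.ofReal (max (y - x) 0 ^ q) ∂μ =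
      ENNReal.ofReal q * ∫⁻ t in Ioi 0, μ (Iic (y - t)) * ENNReal.ofReal (t ^ (q - 1)) := by
  rw [lintegral_rpow_eq_lintegral_meas_le_mul μ (f := fun x => max (y - x) 0)
    (ae_of_all _ fun _ => le_max_right _ _) (by fun_prop) hq]
  congr 1
  refine setLIntegral_congr_fun measurableSet_Ioi fun t (ht : 0 < t) => ?_
  congr 2
  ext x
  simp [ht.not_ge, le_sub_iff_add_le, add_comm]

theorem MeasureTheory.Measure.conv_Iic_eq_lintegral (μ ν : Measure ℝ) [SFinite ν] (y : ℝ) :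
    (μ ∗ ν) (Iic y) = ∫⁻ x, ν (Iic (y - x)) ∂μ := by
  rw [Measure.conv, Measure.map_apply measurable_add measurableSet_Iic,
    Measure.prod_apply (measurable_add measurableSet_Iic)]
  congr! 3 with x
  ext z
  simp [le_sub_iff_add_le']

section PowerLawBounds

variable {μ ν : Measure ℝ} {p q a b y : ℝ}

theorem ae_pos_of_measure_Iic_zero (h : μ (Iic 0) = 0) : ∀ᵐ x ∂μ, 0 < x :=
  (measure_eq_zero_iff_ae_notMem.1 h).mono fun _ hx => not_le.1 hx

theorem conv_Iic_le [SFinite ν] (hp : 0 < p) (hq : 0 < q) (ha : 0 ≤ a) (hb : 0 ≤ b) (hy : 0 < y)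
    (hμ : ∀ z < y, μ (Iic z) ≤ ENNReal.ofReal (a * max z 0 ^ p))
    (hν : ∀ z < y, ν (Iic z) ≤ ENNReal.ofReal (b * max z 0 ^ q)) :
    (μ ∗ ν) (Iic y) ≤ ENNReal.ofReal
      (a * b * (Gamma (p + 1) * Gamma (q + 1) / Gamma (p + q + 1)) * y ^ (p + q)) := by
  have hμ0 : μ (Iic 0) = 0 := by simpa [zero_rpow hp.ne'] using hμ 0 hy
  calc (μ ∗ ν) (Iic y) = ∫⁻ x, ν (Iic (y - x)) ∂μ := Measure.conv_Iic_eq_lintegral μ ν y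
    _ ≤ ∫⁻ x, ENNReal.ofReal b * ENNReal.ofReal (max (y - x) 0 ^ q) ∂μ := by
      refine lintegral_mono_ae ((ae_pos_of_measure_Iic_zero hμ0).mono fun x hx => ?_)
      rw [← ENNReal.ofReal_mul hb]
      exact hν _ (by linarith)
    _ = ENNReal.ofReal b *
        (ENNReal.ofReal q * ∫⁻ t in Ioi 0, μ (Iic (y - t)) * ENNReal.ofReal (t ^ (q - 1))) := by
      rw [lintegral_const_mul' _ _ ENNReal.ofReal_ne_top, lintegral_max_sub_rpow_eq μ hq]
    _ ≤ ENNReal.ofReal b * (ENNReal.ofReal q * ∫⁻ t in Ioi 0, ENNReal.ofReal a *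
        (ENNReal.ofReal (max (y - t) 0 ^ p) * ENNReal.ofReal (t ^ (q - 1)))) := by
      refine mul_le_mul_right (mul_le_mul_right
        (setLIntegral_mono' measurableSet_Ioi fun t (ht : 0 < t) => ?_) _) _
      rw [← mul_assoc, ← ENNReal.ofReal_mul ha]
      exact mul_le_mul_left (hμ _ (by linarith)) _
    _ = _ := by
      rw [lintegral_const_mul' _ _ ENNReal.ofReal_ne_top, mul_left_comm (ENNReal.ofReal q),
        lintegral_Ioi_max_sub_rpow_mul_rpow hp hq hy, ← ENNReal.ofReal_mul ha,
        ← ENNReal.ofReal_mul hb]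
      ring_nf

theorem le_conv_Iic [SFinite ν] (hp : 0 < p) (hq : 0 < q) (ha : 0 ≤ a) (hb : 0 ≤ b) (hy : 0 < y)
    (hμ0 : μ (Iic 0) = 0) (hμ : ∀ z < y, ENNReal.ofReal (a * max z 0 ^ p) ≤ μ (Iic z))
    (hν : ∀ z < y, ENNReal.ofReal (b * max z 0 ^ q) ≤ ν (Iic z)) :
    ENNReal.ofReal (a * b * (Gamma (p + 1) * Gamma (q + 1) / Gamma (p + q + 1)) * y ^ (p + q)) ≤
      (μ ∗ ν) (Iic y) := by
  calc
    _ = ENNReal.ofReal b * (ENNReal.ofReal q * ∫⁻ t in Ioi 0, ENNReal.ofReal a *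
        (ENNReal.ofReal (max (y - t) 0 ^ p) * ENNReal.ofReal (t ^ (q - 1)))) := by
      rw [lintegral_const_mul' _ _ ENNReal.ofReal_ne_top, mul_left_comm (ENNReal.ofReal q),
        lintegral_Ioi_max_sub_rpow_mul_rpow hp hq hy, ← ENNReal.ofReal_mul ha,
        ← ENNReal.ofReal_mul hb]
      ring_nf
    _ ≤ ENNReal.ofReal b *
        (ENNReal.ofReal q * ∫⁻ t in Ioi 0, μ (Iic (y - t)) * ENNReal.ofReal (t ^ (q - 1))) := by
      refine mul_le_mul_right (mul_le_mul_right
        (setLIntegral_mono' measurableSet_Ioi fun t (ht : 0 < t) => ?_) _) _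
      rw [← mul_assoc, ← ENNReal.ofReal_mul ha]
      exact mul_le_mul_left (hμ _ (by linarith)) _
    _ = ∫⁻ x, ENNReal.ofReal b * ENNReal.ofReal (max (y - x) 0 ^ q) ∂μ := by
      rw [lintegral_const_mul' _ _ ENNReal.ofReal_ne_top, lintegral_max_sub_rpow_eq μ hq]
    _ ≤ ∫⁻ x, ν (Iic (y - x)) ∂μ := by
      refine lintegral_mono_ae ((ae_pos_of_measure_Iic_zero hμ0).mono fun x hx => ?_)
      rw [← ENNReal.ofReal_mul hb]
      exact hν _ (by linarith)
    _ = (μ ∗ ν) (Iic y) := (Measure.conv_Iic_eq_lintegral μ ν y).symm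

end PowerLawBounds

section RatioBounds

variable {α : Type*} {l : Filter α} {f g : α → ℝ}

theorem Filter.Tendsto.eventually_bounds_of_div_nhds_one
    (h : Tendsto (fun x => f x / g x) l (𝓝 1)) (hg : ∀ᶠ x in l, 0 < g x) {ε : ℝ} (hε : 0 < ε) :
    ∀ᶠ x in l, (1 - ε) * g x ≤ f x ∧ f x ≤ (1 + ε) * g x := by
  filter_upwards [Metric.tendsto_nhds.1 h ε hε, hg] with x hx hgx
  rw [Real.dist_eq, abs_sub_lt_iff] at hx
  exact ⟨((le_div_iff₀ hgx).1 (by linarith)), ((div_le_iff₀ hgx).1 (by linarith))⟩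

theorem tendsto_div_nhds_one_of_eventually_bounds (hg : ∀ᶠ x in l, 0 < g x)
    (h : ∀ ε > 0, ε ≤ 1 → ∀ᶠ x in l, (1 - ε) * g x ≤ f x ∧ f x ≤ (1 + ε) * g x) :
    Tendsto (fun x => f x / g x) l (𝓝 1) := by
  refine Metric.tendsto_nhds.2 fun ε hε => ?_
  have hε' : 0 < min (ε / 2) 1 := by positivity
  filter_upwards [h _ hε' (min_le_right _ _), hg] with x hx hgx
  have hlo := (le_div_iff₀ hgx).2 hx.1
  have hhi := (div_le_iff₀ hgx).2 hx.2
  rw [Real.dist_eq, abs_sub_lt_iff]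
  constructor <;> linarith [min_le_left (ε / 2) 1]

end RatioBounds

theorem exists_measure_Iic_bounds_of_tendsto {μ : Measure ℝ} [IsFiniteMeasure μ] {a p ε : ℝ}
    (ha : 0 < a) (hp : 0 < p) (hε : 0 < ε)
    (h : Tendsto (fun z => (μ (Iic z)).toReal / (a * z ^ p)) (𝓝[>] 0) (𝓝 1)) :
    ∃ δ > 0, μ (Iic 0) = 0 ∧ ∀ z < δ,
      ENNReal.ofReal ((1 - ε) * a * max z 0 ^ p) ≤ μ (Iic z) ∧
        μ (Iic z) ≤ ENNReal.ofReal ((1 + ε) * a * max z 0 ^ p) := by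
  have hbounds := h.eventually_bounds_of_div_nhds_one
    (eventually_nhdsWithin_of_forall fun z (hz : 0 < z) => by positivity) hε
  obtain ⟨δ, hδ, hδb⟩ := (nhdsGT_basis (0 : ℝ)).eventually_iff.1 hbounds
  have hupper : ∀ z ∈ Ioo 0 δ, μ (Iic z) ≤ ENNReal.ofReal ((1 + ε) * a * z ^ p) := fun z hz => by
    rw [← ENNReal.ofReal_toReal (measure_ne_top μ _), mul_assoc]
    exact ENNReal.ofReal_le_ofReal (hδb hz).2
  have hμ0 : μ (Iic 0) = 0 := by
    have hlim : Tendsto (fun z : ℝ => ENNReal.ofReal ((1 + ε) * a * z ^ p)) (𝓝[>] 0) (𝓝 0) := by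
      have hc : Continuous fun z : ℝ => ENNReal.ofReal ((1 + ε) * a * z ^ p) :=
        ENNReal.continuous_ofReal.comp (continuous_const.mul (continuous_rpow_const hp.le))
      simpa [zero_rpow hp.ne'] using (hc.tendsto 0).mono_left nhdsWithin_le_nhds
    refine nonpos_iff_eq_zero.1 (ge_of_tendsto hlim ?_)
    filter_upwards [Ioo_mem_nhdsGT hδ] with z hz
    exact (measure_mono (Iic_subset_Iic.2 hz.1.le)).trans (hupper z hz)
  refine ⟨δ, hδ, hμ0, fun z hz => ?_⟩
  rcases le_or_gt z 0 with hz0 | hz0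
  · have : μ (Iic z) = 0 := measure_mono_null (Iic_subset_Iic.2 hz0) hμ0
    simp [this, max_eq_right hz0, zero_rpow hp.ne']
  · rw [max_eq_left hz0.le, ← ENNReal.ofReal_toReal (measure_ne_top μ _), mul_assoc, mul_assoc]
    exact ⟨ENNReal.ofReal_le_ofReal (hδb ⟨hz0, hz⟩).1, ENNReal.ofReal_le_ofReal (hδb ⟨hz0, hz⟩).2⟩

theorem tendsto_conv_Iic_div_rpow {μ ν : Measure ℝ} [IsFiniteMeasure μ] [IsFiniteMeasure ν]
    {p q a b : ℝ} (hp : 0 < p) (hq : 0 < q) (ha : 0 < a) (hb : 0 < b)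
    (hμ : Tendsto (fun z => (μ (Iic z)).toReal / (a * z ^ p)) (𝓝[>] 0) (𝓝 1))
    (hν : Tendsto (fun z => (ν (Iic z)).toReal / (b * z ^ q)) (𝓝[>] 0) (𝓝 1)) :
    Tendsto (fun y => ((μ ∗ ν) (Iic y)).toReal /
        (a * b * (Gamma (p + 1) * Gamma (q + 1) / Gamma (p + q + 1)) * y ^ (p + q)))
      (𝓝[>] 0) (𝓝 1) := by
  set K := Gamma (p + 1) * Gamma (q + 1) / Gamma (p + q + 1)
  refine tendsto_div_nhds_one_of_eventually_bounds
    (eventually_nhdsWithin_of_forall fun y (hy : 0 < y) => by positivity) fun ε hε hε1 => ?_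
  have hε3 : 0 < ε / 3 := by positivity
  obtain ⟨δμ, hδμ, hμ0, hμb⟩ := exists_measure_Iic_bounds_of_tendsto ha hp hε3 hμ
  obtain ⟨δν, hδν, -, hνb⟩ := exists_measure_Iic_bounds_of_tendsto hb hq hε3 hν
  filter_upwards [Ioo_mem_nhdsGT (lt_min hδμ hδν)] with y ⟨hy, hyδ⟩
  have hyμ : y < δμ := hyδ.trans_le (min_le_left _ _)
  have hyν : y < δν := hyδ.trans_le (min_le_right _ _)
  have hlo := le_conv_Iic hp hq (by nlinarith) (by nlinarith) hy hμ0
    (fun z hz => (hμb z (hz.trans hyμ)).1) (fun z hz => (hνb z (hz.trans hyν)).1)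
  have hhi := conv_Iic_le hp hq (by positivity) (by positivity) hy
    (fun z hz => (hμb z (hz.trans hyμ)).2) (fun z hz => (hνb z (hz.trans hyν)).2)
  constructor
  · calc (1 - ε) * (a * b * K * y ^ (p + q))
        ≤ (1 - ε / 3) ^ 2 * (a * b * K * y ^ (p + q)) := by gcongr; nlinarith
      _ = (1 - ε / 3) * a * ((1 - ε / 3) * b) * K * y ^ (p + q) := by ring
      _ ≤ ((μ ∗ ν) (Iic y)).toReal := (ENNReal.ofReal_le_iff_le_toReal (measure_ne_top _ _)).1 hlo
  · calc ((μ ∗ ν) (Iic y)).toReal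
        ≤ (1 + ε / 3) * a * ((1 + ε / 3) * b) * K * y ^ (p + q) :=
          ENNReal.toReal_le_of_le_ofReal (by positivity) hhi
      _ = (1 + ε / 3) ^ 2 * (a * b * K * y ^ (p + q)) := by ring
      _ ≤ (1 + ε) * (a * b * K * y ^ (p + q)) := by gcongr; nlinarith

theorem betaFn_three_halves_constant_eq {M : ℕ} (hM : 1 ≤ M) {D : ℝ} (hD : 0 < D) :
    2 ^ M * D ^ (((M : ℝ) + 1) / 2) * betaFn (3 / 2) ((M : ℝ) / 2) /
        (π ^ ((M : ℝ) / 2) * (Nat.factorial (M - 1)) * (M : ℝ) ^ ((1 : ℝ) / 2) * Gamma (1 / 2)) =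
      2 ^ M / π ^ ((M : ℝ) / 2) * D ^ ((M : ℝ) / 2) / (Nat.factorial M) *
        (2 * D ^ ((1 : ℝ) / 2) / ((M : ℝ) ^ ((1 : ℝ) / 2) * sqrt π)) *
        (Gamma ((M : ℝ) / 2 + 1) * Gamma (1 / 2 + 1) / Gamma ((M : ℝ) / 2 + 1 / 2 + 1)) := by
  have hfac : (Nat.factorial M : ℝ) = M * Nat.factorial (M - 1) := by
    rw [← Nat.cast_mul, Nat.mul_factorial_pred (by omega)]
  have hDpow : D ^ (((M : ℝ) + 1) / 2) = D ^ ((M : ℝ) / 2) * D ^ ((1 : ℝ) / 2) := by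
    rw [← rpow_add hD]; ring_nf
  rw [betaFn, hfac, hDpow, Gamma_add_one (s := (M : ℝ) / 2) (by positivity), ← Gamma_one_half_eq,
    show (3 : ℝ) / 2 = 1 / 2 + 1 by norm_num,
    show (M : ℝ) / 2 + 1 / 2 + 1 = 1 / 2 + 1 + (M : ℝ) / 2 by ring]
  have : Gamma (1 / 2 + 1 + (M : ℝ) / 2) ≠ 0 := (Gamma_pos_of_pos (by positivity)).ne'
  have : Gamma (1 / 2) ≠ 0 := (Gamma_pos_of_pos (by norm_num)).ne'
  field_simp

theorem stmt_9_general {Ω : Type*} [MeasurableSpace Ω] (P : Measure Ω) [IsProbabilityMeasure P]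
    (M : ℕ) (hM : 1 ≤ M) (d α : ℝ) (hd : 0 ≤ d)
    (Zs Z0 : Ω → ℝ) (hZsmeas : Measurable Zs) (hZ0meas : Measurable Z0)
    (hindep : IndepFun Zs Z0 P)
    (hFZs : Tendsto (fun z : ℝ =>
        (P {ω | Zs ω ≤ z}).toReal /
          (2 ^ M / π ^ ((M : ℝ) / 2) * (1 + d ^ α) ^ ((M : ℝ) / 2) * z ^ ((M : ℝ) / 2) /
            (Nat.factorial M)))
      (𝓝[>] 0) (𝓝 1))
    (hFZ0 : Tendsto (fun z : ℝ =>
        (P {ω | Z0 ω ≤ z}).toReal /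
          (2 * (1 + d ^ α) ^ ((1:ℝ) / 2) * z ^ ((1:ℝ) / 2) /
            ((M : ℝ) ^ ((1:ℝ) / 2) * Real.sqrt π)))
      (𝓝[>] 0) (𝓝 1)) :
    Tendsto (fun y : ℝ =>
        (P {ω | Zs ω + Z0 ω ≤ y}).toReal /
          (2 ^ M * (1 + d ^ α) ^ (((M : ℝ) + 1) / 2) * betaFn (3 / 2) ((M : ℝ) / 2) /
              (π ^ ((M : ℝ) / 2) * (Nat.factorial (M - 1)) * (M : ℝ) ^ ((1:ℝ) / 2) *
                Real.Gamma (1 / 2)) *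
            y ^ (((M : ℝ) + 1) / 2)))
      (𝓝[>] 0) (𝓝 1) := by
  have hD : 0 < 1 + d ^ α := by positivity
  have hcdf : ∀ X : Ω → ℝ, Measurable X → ∀ z, P.map X (Iic z) = P {ω | X ω ≤ z} :=
    fun X hX z => Measure.map_apply hX measurableSet_Iic
  have hsum : ∀ y, P {ω | Zs ω + Z0 ω ≤ y} = (P.map Zs ∗ P.map Z0) (Iic y) := fun y => by
    rw [← hindep.map_add_eq_map_conv_map hZsmeas hZ0meas, hcdf _ (hZsmeas.add hZ0meas)]
    rfl
  have key := tendsto_conv_Iic_div_rpow (μ := P.map Zs) (ν := P.map Z0) (p := (M : ℝ) / 2)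
    (a := 2 ^ M / π ^ ((M : ℝ) / 2) * (1 + d ^ α) ^ ((M : ℝ) / 2) / (Nat.factorial M))
    (b := 2 * (1 + d ^ α) ^ ((1 : ℝ) / 2) / ((M : ℝ) ^ ((1 : ℝ) / 2) * sqrt π))
    (by positivity) one_half_pos (by positivity) (by positivity)
    (hFZs.congr fun z => by rw [hcdf Zs hZsmeas, mul_div_right_comm])
    (hFZ0.congr fun z => by rw [hcdf Z0 hZ0meas, mul_div_right_comm])
  refine key.congr fun y => ?_
  rw [hsum, betaFn_three_halves_constant_eq hM hD, show ((M : ℝ) + 1) / 2 = M / 2 + 1 / 2 by ring]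

theorem stmt_9 {Ω : Type*} [MeasurableSpace Ω] (P : Measure Ω) [IsProbabilityMeasure P]
    (M : ℕ) (hM : 1 ≤ M) (d α : ℝ) (hd : 0 ≤ d) (hα : 0 < α)
    (Zs Z0 : Ω → ℝ) (hZsmeas : Measurable Zs) (hZ0meas : Measurable Z0)
    (hZs0 : ∀ ω, 0 ≤ Zs ω) (hZ00 : ∀ ω, 0 ≤ Z0 ω)
    (hindep : IndepFun Zs Z0 P)
    (hFZs : Tendsto (fun z : ℝ =>
        (P {ω | Zs ω ≤ z}).toReal /
          (2 ^ M / π ^ ((M : ℝ) / 2) * (1 + d ^ α) ^ ((M : ℝ) / 2) * z ^ ((M : ℝ) / 2) /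
            (Nat.factorial M)))
      (𝓝[>] 0) (𝓝 1))
    (hFZ0 : Tendsto (fun z : ℝ =>
        (P {ω | Z0 ω ≤ z}).toReal /
          (2 * (1 + d ^ α) ^ ((1:ℝ) / 2) * z ^ ((1:ℝ) / 2) /
            ((M : ℝ) ^ ((1:ℝ) / 2) * Real.sqrt π)))
      (𝓝[>] 0) (𝓝 1)) :
    Tendsto (fun y : ℝ =>
        (P {ω | Zs ω + Z0 ω ≤ y}).toReal /
          (2 ^ M * (1 + d ^ α) ^ (((M : ℝ) + 1) / 2) * betaFn (3 / 2) ((M : ℝ) / 2) /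
              (π ^ ((M : ℝ) / 2) * (Nat.factorial (M - 1)) * (M : ℝ) ^ ((1:ℝ) / 2) *
                Real.Gamma (1 / 2)) *
            y ^ (((M : ℝ) + 1) / 2)))
      (𝓝[>] 0) (𝓝 1) :=
  stmt_9_general P M hM d α hd Zs Z0 hZsmeas hZ0meas hindep hFZs hFZ0
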